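/- arXiv:math/0307131 — 3 statements merged into one kernel-verified Lean document; each statement's English description precedes it below -/
import Mathlib

section
/- Let H be an inner product space over 𝕂 (ℝ or ℂ), let x, y₁,…,yₙ ∈ H and c₁,…,cₙ ∈ 𝕂, and let p, q > 1 satisfy 1/p + 1/q = 1. Then |∑_{i=1}^n cᵢ ⟨x, yᵢ⟩|² ≤ ‖x‖² · (∑_{i=1}^n |cᵢ|^p)^{2/p} · (∑_{i,j=1}^n |⟨yᵢ, yⱼ⟩|^q)^{1/q}. -/
/-!
With `z = ∑ i, c i • y i` the left-hand side is `‖⟪x, z⟫‖²`, which Cauchy–Schwarz bounds by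
`‖x‖² ‖z‖²`. Expanding `‖z‖² = ∑ i j, conj (c i) c j ⟪y i, y j⟫` and applying Hölder's inequality
on the index set of pairs `(i, j)` to the weights `‖c i‖ ‖c j‖` and `‖⟪y i, y j⟫‖` gives
`‖z‖² ≤ (∑ i, ‖c i‖ ^ p) ^ (2 / p) (∑ i j, ‖⟪y i, y j⟫‖ ^ q) ^ (1 / q)`.
-/

open Finset

section Holder

variable {ι : Type*} {p q : ℝ}

theorem Real.sum_sum_mul_mul_le_rpow_mul_rpow (s : Finset ι) {a : ι → ℝ} {b : ι → ι → ℝ}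
    (ha : ∀ i ∈ s, 0 ≤ a i) (hb : ∀ i ∈ s, ∀ j ∈ s, 0 ≤ b i j) (hpq : p.HolderConjugate q) :
    ∑ i ∈ s, ∑ j ∈ s, a i * a j * b i j
      ≤ (∑ i ∈ s, a i ^ p) ^ (2 / p) * (∑ i ∈ s, ∑ j ∈ s, b i j ^ q) ^ (1 / q) := by
  have hA : 0 ≤ ∑ i ∈ s, a i ^ p := sum_nonneg fun i hi ↦ Real.rpow_nonneg (ha i hi) p
  have hpairs : ∑ ij ∈ s ×ˢ s, (a ij.1 * a ij.2) ^ p = (∑ i ∈ s, a i ^ p) ^ 2 := by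
    rw [sum_product, sq, sum_mul_sum]
    exact sum_congr rfl fun i hi ↦ sum_congr rfl fun j hj ↦ Real.mul_rpow (ha i hi) (ha j hj)
  have holder := Real.inner_le_Lp_mul_Lq_of_nonneg (s ×ˢ s) (f := fun ij ↦ a ij.1 * a ij.2)
    (g := fun ij ↦ b ij.1 ij.2) hpq
    (fun ij hij ↦ mul_nonneg (ha _ (mem_product.1 hij).1) (ha _ (mem_product.1 hij).2))
    (fun ij hij ↦ hb _ (mem_product.1 hij).1 _ (mem_product.1 hij).2)
  rw [hpairs, sum_product, sum_product, ← Real.rpow_natCast, ← Real.rpow_mul hA] at holder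
  convert holder using 3
  push_cast
  ring

end Holder

section InnerProduct

variable {𝕜 E ι : Type*} [RCLike 𝕜] [NormedAddCommGroup E] [InnerProductSpace 𝕜 E]

theorem sum_mul_inner_eq_inner_sum_smul (s : Finset ι) (x : E) (y : ι → E) (c : ι → 𝕜) :
    ∑ i ∈ s, c i * inner 𝕜 x (y i) = inner 𝕜 x (∑ i ∈ s, c i • y i) := by
  simp only [inner_sum, inner_smul_right]

theorem norm_sum_smul_sq_le_sum_sum_mul_norm_inner (s : Finset ι) (y : ι → E) (c : ι → 𝕜) :
    ‖∑ i ∈ s, c i • y i‖ ^ 2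
      ≤ ∑ i ∈ s, ∑ j ∈ s, ‖c i‖ * ‖c j‖ * ‖(inner 𝕜 (y i) (y j) : 𝕜)‖ := by
  have hgram : (inner 𝕜 (∑ i ∈ s, c i • y i) (∑ i ∈ s, c i • y i) : 𝕜)
      = ∑ i ∈ s, ∑ j ∈ s, starRingEnd 𝕜 (c i) * c j * inner 𝕜 (y i) (y j) := by
    rw [sum_inner]
    simp only [inner_smul_left, inner_sum, inner_smul_right]
    exact sum_congr rfl fun _ _ ↦ sum_congr rfl fun _ _ ↦ by ring
  calc ‖∑ i ∈ s, c i • y i‖ ^ 2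
      = ‖(inner 𝕜 (∑ i ∈ s, c i • y i) (∑ i ∈ s, c i • y i) : 𝕜)‖ := by
        rw [inner_self_eq_norm_sq_to_K, norm_pow, RCLike.norm_ofReal, abs_norm]
    _ ≤ ∑ i ∈ s, ‖∑ j ∈ s, starRingEnd 𝕜 (c i) * c j * inner 𝕜 (y i) (y j)‖ :=
        hgram ▸ norm_sum_le _ _
    _ ≤ ∑ i ∈ s, ∑ j ∈ s, ‖c i‖ * ‖c j‖ * ‖(inner 𝕜 (y i) (y j) : 𝕜)‖ := by
        gcongr with i _
        refine (norm_sum_le _ _).trans_eq (sum_congr rfl fun j _ ↦ ?_)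
        rw [norm_mul, norm_mul, RCLike.norm_conj]

theorem norm_sum_smul_sq_le_rpow_mul_rpow (s : Finset ι) (y : ι → E) (c : ι → 𝕜) {p q : ℝ}
    (hpq : p.HolderConjugate q) :
    ‖∑ i ∈ s, c i • y i‖ ^ 2
      ≤ (∑ i ∈ s, ‖c i‖ ^ p) ^ (2 / p)
        * (∑ i ∈ s, ∑ j ∈ s, ‖(inner 𝕜 (y i) (y j) : 𝕜)‖ ^ q) ^ (1 / q) :=
  (norm_sum_smul_sq_le_sum_sum_mul_norm_inner s y c).trans <|
    Real.sum_sum_mul_mul_le_rpow_mul_rpow s (fun _ _ ↦ norm_nonneg _)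
      (fun _ _ _ _ ↦ norm_nonneg _) hpq

end InnerProduct

theorem stmt_8_general {𝕜 H : Type*} [RCLike 𝕜] [NormedAddCommGroup H] [InnerProductSpace 𝕜 H]
    {n : ℕ} (x : H) (y : Fin n → H) (c : Fin n → 𝕜)
    {p q : ℝ} (hp : 1 < p) (hpq : 1 / p + 1 / q = 1) :
    ‖∑ i, c i * (inner 𝕜 x (y i) : 𝕜)‖ ^ 2 ≤ ‖x‖ ^ 2 * (∑ i, ‖c i‖ ^ p) ^ (2 / p) * (∑ i, ∑ j, ‖(inner 𝕜 (y i) (y j) : 𝕜)‖ ^ q) ^ (1 / q) := by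
  have hconj : p.HolderConjugate q :=
    Real.holderConjugate_iff.mpr ⟨hp, by simpa only [one_div] using hpq⟩
  set z := ∑ i, c i • y i
  calc ‖∑ i, c i * (inner 𝕜 x (y i) : 𝕜)‖ ^ 2 = ‖(inner 𝕜 x z : 𝕜)‖ ^ 2 := by
        rw [sum_mul_inner_eq_inner_sum_smul]
    _ ≤ ‖x‖ ^ 2 * ‖z‖ ^ 2 := by
        rw [← mul_pow]; gcongr; exact norm_inner_le_norm x z
    _ ≤ _ := by
        rw [mul_assoc]; gcongr; exact norm_sum_smul_sq_le_rpow_mul_rpow _ y c hconj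

theorem stmt_8 {𝕜 H : Type*} [RCLike 𝕜] [NormedAddCommGroup H] [InnerProductSpace 𝕜 H]
    {n : ℕ} (x : H) (y : Fin n → H) (c : Fin n → 𝕜)
    {p q : ℝ} (hp : 1 < p) (hq : 1 < q) (hpq : 1 / p + 1 / q = 1) :
    ‖∑ i, c i * (inner 𝕜 x (y i) : 𝕜)‖ ^ 2 ≤ ‖x‖ ^ 2 * (∑ i, ‖c i‖ ^ p) ^ (2 / p) * (∑ i, ∑ j, ‖(inner 𝕜 (y i) (y j) : 𝕜)‖ ^ q) ^ (1 / q) :=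
  stmt_8_general x y c hp hpq
end

section
/- Let H be an inner product space over 𝕂 (ℝ or ℂ), let x, y₁,…,yₙ ∈ H and c₁,…,cₙ ∈ 𝕂. Then |∑_{i=1}^n cᵢ ⟨x, yᵢ⟩|² ≤ ‖x‖² · (∑_{i=1}^n |cᵢ|²) · (∑_{i,j=1}^n |⟨yᵢ, yⱼ⟩|²)^{1/2}, and moreover ‖x‖² · (∑_{i=1}^n |cᵢ|²) · (∑_{i,j=1}^n |⟨yᵢ, yⱼ⟩|²)^{1/2} ≤ ‖x‖² · (∑_{i=1}^n |cᵢ|²) · (∑_{i=1}^n ‖yᵢ‖²). -/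
/-!
Put `z = ∑ cᵢ yᵢ`, so that `∑ cᵢ ⟪x, yᵢ⟫ = ⟪x, z⟫` and Cauchy–Schwarz gives `|⟪x, z⟫|² ≤ ‖x‖² ‖z‖²`.
Expanding, `‖z‖² ≤ ∑ᵢⱼ |cᵢ| |cⱼ| |⟪yᵢ, yⱼ⟫|`, and Cauchy–Schwarz on the index set of pairs bounds
this by `(∑ |cᵢ|²) (∑ᵢⱼ |⟪yᵢ, yⱼ⟫|²)^{1/2}`. The second inequality is `|⟪yᵢ, yⱼ⟫| ≤ ‖yᵢ‖ ‖yⱼ‖`.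
-/

open Finset

section DoubleSum

variable {ι : Type*} [Fintype ι]

lemma sum_sum_mul_mul_le_sum_sq_mul_sqrt (a : ι → ℝ) (g : ι → ι → ℝ) :
    ∑ i, ∑ j, a i * a j * g i j ≤ (∑ i, a i ^ 2) * √(∑ i, ∑ j, g i j ^ 2) := by
  simp only [← Fintype.sum_prod_type']
  calc ∑ p : ι × ι, a p.1 * a p.2 * g p.1 p.2
      ≤ √(∑ p : ι × ι, (a p.1 * a p.2) ^ 2) * √(∑ p : ι × ι, g p.1 p.2 ^ 2) :=
        Real.sum_mul_le_sqrt_mul_sqrt _ _ _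
    _ = (∑ i, a i ^ 2) * √(∑ p : ι × ι, g p.1 p.2 ^ 2) := by
        have hsq : ∑ p : ι × ι, (a p.1 * a p.2) ^ 2 = (∑ i, a i ^ 2) ^ 2 := by
          simp only [mul_pow, sq (∑ i, a i ^ 2), sum_mul_sum]
          exact Fintype.sum_prod_type' fun i j => a i ^ 2 * a j ^ 2
        rw [hsq, Real.sqrt_sq (sum_nonneg fun i _ => sq_nonneg (a i))]

end DoubleSum

section InnerProduct

variable {𝕜 H ι : Type*} [RCLike 𝕜] [NormedAddCommGroup H] [InnerProductSpace 𝕜 H] [Fintype ι]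

lemma norm_sum_smul_sq_le (y : ι → H) (c : ι → 𝕜) :
    ‖∑ i, c i • y i‖ ^ 2 ≤ ∑ i, ∑ j, ‖c i‖ * ‖c j‖ * ‖(inner 𝕜 (y i) (y j) : 𝕜)‖ := by
  have hexpand : (inner 𝕜 (∑ i, c i • y i) (∑ j, c j • y j) : 𝕜)
      = ∑ i, ∑ j, c j * (starRingEnd 𝕜 (c i) * inner 𝕜 (y i) (y j)) := by
    rw [sum_inner]
    simp only [inner_sum, inner_smul_left, inner_smul_right]
  rw [norm_sq_eq_re_inner (𝕜 := 𝕜), inner_self_re_eq_norm, hexpand]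
  refine (norm_sum_le _ _).trans (sum_le_sum fun i _ => (norm_sum_le _ _).trans_eq ?_)
  exact sum_congr rfl fun j _ => by rw [norm_mul, norm_mul, RCLike.norm_conj]; ring

lemma sqrt_sum_sum_norm_inner_sq_le (y : ι → H) :
    √(∑ i, ∑ j, ‖(inner 𝕜 (y i) (y j) : 𝕜)‖ ^ 2) ≤ ∑ i, ‖y i‖ ^ 2 := by
  refine Real.sqrt_le_iff.2 ⟨sum_nonneg fun i _ => sq_nonneg _, ?_⟩
  rw [sq (∑ i, ‖y i‖ ^ 2), sum_mul_sum]
  gcongr with i _ j _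
  calc ‖(inner 𝕜 (y i) (y j) : 𝕜)‖ ^ 2 ≤ (‖y i‖ * ‖y j‖) ^ 2 := by
        gcongr; exact norm_inner_le_norm _ _
    _ = ‖y i‖ ^ 2 * ‖y j‖ ^ 2 := mul_pow _ _ _

end InnerProduct

theorem stmt_13 {𝕜 H : Type*} [RCLike 𝕜] [NormedAddCommGroup H] [InnerProductSpace 𝕜 H]
    {n : ℕ} (x : H) (y : Fin n → H) (c : Fin n → 𝕜) :
    ‖∑ i, c i * (inner 𝕜 x (y i) : 𝕜)‖ ^ 2 ≤ ‖x‖ ^ 2 * (∑ i, ‖c i‖ ^ 2) * Real.sqrt (∑ i, ∑ j, ‖(inner 𝕜 (y i) (y j) : 𝕜)‖ ^ 2) ∧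
      ‖x‖ ^ 2 * (∑ i, ‖c i‖ ^ 2) * Real.sqrt (∑ i, ∑ j, ‖(inner 𝕜 (y i) (y j) : 𝕜)‖ ^ 2) ≤ ‖x‖ ^ 2 * (∑ i, ‖c i‖ ^ 2) * (∑ i, ‖y i‖ ^ 2) := by
  refine ⟨?_, by gcongr; exact sqrt_sum_sum_norm_inner_sq_le y⟩
  calc ‖∑ i, c i * (inner 𝕜 x (y i) : 𝕜)‖ ^ 2 = ‖(inner 𝕜 x (∑ i, c i • y i) : 𝕜)‖ ^ 2 := by
        simp only [inner_sum, inner_smul_right]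
    _ ≤ (‖x‖ * ‖∑ i, c i • y i‖) ^ 2 := by gcongr; exact norm_inner_le_norm _ _
    _ = ‖x‖ ^ 2 * ‖∑ i, c i • y i‖ ^ 2 := mul_pow _ _ _
    _ ≤ ‖x‖ ^ 2 * (∑ i, ∑ j, ‖c i‖ * ‖c j‖ * ‖(inner 𝕜 (y i) (y j) : 𝕜)‖) := by
        gcongr; exact norm_sum_smul_sq_le y c
    _ ≤ ‖x‖ ^ 2 * ((∑ i, ‖c i‖ ^ 2) * √(∑ i, ∑ j, ‖(inner 𝕜 (y i) (y j) : 𝕜)‖ ^ 2)) := by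
        gcongr; exact sum_sum_mul_mul_le_sum_sq_mul_sqrt _ _
    _ = _ := (mul_assoc _ _ _).symm
end

section
/- Let H be an inner product space over 𝕂 (ℝ or ℂ) and let x, y₁,…,yₙ ∈ H. Then ∑_{i=1}^n |⟨x, yᵢ⟩|² ≤ ‖x‖ · (max_{1≤i≤n} |⟨x, yᵢ⟩|) · (∑_{i,j=1}^n |⟨yᵢ, yⱼ⟩|)^{1/2}. -/
/-!
Put `S = ∑ i, aᵢ • yᵢ` with `aᵢ = conj ⟪x, yᵢ⟫`. Then `⟪x, S⟫ = ∑ i, |⟪x, yᵢ⟫|²`, so Cauchy–Schwarz gives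
`∑ i, |⟪x, yᵢ⟫|² ≤ ‖x‖ ‖S‖`. Expanding `‖S‖² = ∑ i j, conj aᵢ aⱼ ⟪yᵢ, yⱼ⟫` and bounding every
coefficient `|aᵢ|` by `M = maxᵢ |⟪x, yᵢ⟫|` gives `‖S‖ ≤ M (∑ i j, |⟪yᵢ, yⱼ⟫|)^{1/2}`.
-/

open Finset

section

variable {𝕜 H ι : Type*} [RCLike 𝕜] [SeminormedAddCommGroup H] [InnerProductSpace 𝕜 H]

theorem inner_sum_conj_inner_smul (s : Finset ι) (x : H) (y : ι → H) :
    inner 𝕜 x (∑ i ∈ s, starRingEnd 𝕜 (inner 𝕜 x (y i)) • y i)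
      = ((∑ i ∈ s, ‖(inner 𝕜 x (y i) : 𝕜)‖ ^ 2 : ℝ) : 𝕜) := by
  rw [inner_sum]
  push_cast
  refine sum_congr rfl fun i _ => ?_
  rw [inner_smul_right, RCLike.conj_mul]

theorem sum_norm_inner_sq_le_norm_mul_norm_sum (s : Finset ι) (x : H) (y : ι → H) :
    ∑ i ∈ s, ‖(inner 𝕜 x (y i) : 𝕜)‖ ^ 2
      ≤ ‖x‖ * ‖∑ i ∈ s, starRingEnd 𝕜 (inner 𝕜 x (y i)) • y i‖ := by
  have hsum : 0 ≤ ∑ i ∈ s, ‖(inner 𝕜 x (y i) : 𝕜)‖ ^ 2 := by positivity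
  calc ∑ i ∈ s, ‖(inner 𝕜 x (y i) : 𝕜)‖ ^ 2
      = ‖inner 𝕜 x (∑ i ∈ s, starRingEnd 𝕜 (inner 𝕜 x (y i)) • y i)‖ := by
        rw [inner_sum_conj_inner_smul, RCLike.norm_ofReal, abs_of_nonneg hsum]
    _ ≤ _ := norm_inner_le_norm _ _

theorem norm_sum_smul_sq_le_sum_sum (s : Finset ι) (a : ι → 𝕜) (y : ι → H) :
    ‖∑ i ∈ s, a i • y i‖ ^ 2
      ≤ ∑ i ∈ s, ∑ j ∈ s, ‖a i‖ * ‖a j‖ * ‖(inner 𝕜 (y i) (y j) : 𝕜)‖ := by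
  calc ‖∑ i ∈ s, a i • y i‖ ^ 2
      = ‖(inner 𝕜 (∑ i ∈ s, a i • y i) (∑ j ∈ s, a j • y j) : 𝕜)‖ := by
        rw [inner_self_eq_norm_sq_to_K, norm_pow, RCLike.norm_ofReal, abs_norm]
    _ = ‖∑ i ∈ s, ∑ j ∈ s, starRingEnd 𝕜 (a i) * a j * inner 𝕜 (y i) (y j)‖ := by
        rw [sum_inner]
        refine congrArg norm (sum_congr rfl fun i _ => ?_)
        rw [inner_smul_left, inner_sum, mul_sum]
        simp only [inner_smul_right, mul_assoc]
    _ ≤ ∑ i ∈ s, ∑ j ∈ s, ‖starRingEnd 𝕜 (a i) * a j * inner 𝕜 (y i) (y j)‖ :=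
        (norm_sum_le _ _).trans (sum_le_sum fun i _ => norm_sum_le _ _)
    _ = _ := by simp only [norm_mul, RCLike.norm_conj]

theorem norm_sum_smul_le_mul_sqrt (s : Finset ι) (a : ι → 𝕜) (y : ι → H) {M : ℝ}
    (hM₀ : 0 ≤ M) (hM : ∀ i ∈ s, ‖a i‖ ≤ M) :
    ‖∑ i ∈ s, a i • y i‖ ≤ M * √(∑ i ∈ s, ∑ j ∈ s, ‖(inner 𝕜 (y i) (y j) : 𝕜)‖) := by
  have hsq : ‖∑ i ∈ s, a i • y i‖ ^ 2 ≤ M ^ 2 * ∑ i ∈ s, ∑ j ∈ s, ‖(inner 𝕜 (y i) (y j) : 𝕜)‖ :=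
    calc ‖∑ i ∈ s, a i • y i‖ ^ 2
        ≤ ∑ i ∈ s, ∑ j ∈ s, ‖a i‖ * ‖a j‖ * ‖(inner 𝕜 (y i) (y j) : 𝕜)‖ :=
          norm_sum_smul_sq_le_sum_sum s a y
      _ ≤ ∑ i ∈ s, ∑ j ∈ s, M ^ 2 * ‖(inner 𝕜 (y i) (y j) : 𝕜)‖ := by
          gcongr with i hi j hj
          rw [sq]
          exact mul_le_mul (hM i hi) (hM j hj) (norm_nonneg _) hM₀
      _ = _ := by simp only [mul_sum]
  rw [← Real.sqrt_sq hM₀, ← Real.sqrt_mul (sq_nonneg M)]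
  exact Real.le_sqrt_of_sq_le hsq

end

theorem stmt_14 {𝕜 H : Type*} [RCLike 𝕜] [NormedAddCommGroup H] [InnerProductSpace 𝕜 H]
    {n : ℕ} (hn : 0 < n) (x : H) (y : Fin n → H) :
    ∑ i, ‖(inner 𝕜 x (y i) : 𝕜)‖ ^ 2 ≤ ‖x‖ * (Finset.univ.sup' (Finset.univ_nonempty_iff.mpr ⟨⟨0, hn⟩⟩) (fun i => ‖(inner 𝕜 x (y i) : 𝕜)‖)) * Real.sqrt (∑ i, ∑ j, ‖(inner 𝕜 (y i) (y j) : 𝕜)‖) := by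
  set M := univ.sup' (univ_nonempty_iff.mpr ⟨⟨0, hn⟩⟩) fun i => ‖(inner 𝕜 x (y i) : 𝕜)‖
  have hM : ∀ i ∈ univ, ‖starRingEnd 𝕜 (inner 𝕜 x (y i))‖ ≤ M := fun i hi => by
    rw [RCLike.norm_conj]
    exact le_sup' (fun i => ‖(inner 𝕜 x (y i) : 𝕜)‖) hi
  have hM₀ : 0 ≤ M :=
    (norm_nonneg _).trans (le_sup' (fun i => ‖(inner 𝕜 x (y i) : 𝕜)‖) (mem_univ ⟨0, hn⟩))
  calc ∑ i, ‖(inner 𝕜 x (y i) : 𝕜)‖ ^ 2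
      ≤ ‖x‖ * ‖∑ i, starRingEnd 𝕜 (inner 𝕜 x (y i)) • y i‖ :=
        sum_norm_inner_sq_le_norm_mul_norm_sum univ x y
    _ ≤ ‖x‖ * (M * √(∑ i, ∑ j, ‖(inner 𝕜 (y i) (y j) : 𝕜)‖)) := by
        gcongr
        exact norm_sum_smul_le_mul_sqrt univ _ y hM₀ hM
    _ = _ := (mul_assoc _ _ _).symm
end
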